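/- For fixed a ∈ (0, 1/2], the function f₁₀(r) = 𝒦ₐ(r) − 3(1-a)·(ℰₐ(r) − (1-r²)·𝒦ₐ(r))/r² is strictly increasing on (0,1). -/

import Mathlib

open Real Filter Set Topology

/-- Pochhammer symbol (rising factorial) for real `x`. -/
noncomputable def poch (x : ℝ) (n : ℕ) : ℝ := (ascPochhammer ℝ n).eval x

/-- Generalized complete elliptic integral of the first kind. -/
noncomputable def Ka (a r : ℝ) : ℝ :=
  (π / 2) * ∑' n : ℕ, (poch a n * poch (1 - a) n / (n.factorial : ℝ) ^ 2) * r ^ (2 * n)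

/-- Generalized complete elliptic integral of the second kind. -/
noncomputable def Ea (a r : ℝ) : ℝ :=
  (π / 2) * ∑' n : ℕ, (poch (a - 1) n * poch (1 - a) n / (n.factorial : ℝ) ^ 2) * r ^ (2 * n)

/-- Generalized Grötzsch ring function. -/
noncomputable def muG (a r : ℝ) : ℝ :=
  π / (2 * Real.sin (π * a)) * (Ka a (Real.sqrt (1 - r ^ 2)) / Ka a r)

/-- Generalized Hersch–Pfluger distortion function. -/
noncomputable def phiHP (a K r : ℝ) : ℝ := Function.invFun (muG a) (muG a r / K)

/-- The function mₐ(r). -/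
noncomputable def mA (a r : ℝ) : ℝ :=
  2 / (π * Real.sin (π * a)) * (1 - r ^ 2) * Ka a (Real.sqrt (1 - r ^ 2)) * Ka a r

/-- Digamma function (as the logarithmic derivative of Γ). -/
noncomputable def psiDG (x : ℝ) : ℝ := deriv (fun t => Real.log (Real.Gamma t)) x

/-- Ramanujan constant R(a). -/
noncomputable def RamanujanR (a : ℝ) : ℝ :=
  -2 * Real.eulerMascheroniConstant - psiDG a - psiDG (1 - a)

/-! The Maclaurin coefficients `c n` of `𝒦ₐ` and `e n` of `ℰₐ` (as series in `r²`) satisfy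
`e (n + 1) = c (n + 1) - c n + a / (n + 1) * c n`, so `ℰₐ - (1 - r²) 𝒦ₐ = r² (π/2) ∑ a/(n+1) c n r^{2n}`.
Hence `f₁₀` is the power series in `r²` with coefficients `(1 - 3a(1-a)/(n+1)) c n`, which are positive
since `3a(1-a) ≤ 3/4`; a power series with positive coefficients is strictly increasing on `[0, 1)`. -/

lemma poch_succ (x : ℝ) (n : ℕ) : poch x (n + 1) = poch x n * (x + n) :=
  ascPochhammer_succ_eval n x

lemma poch_succ' (x : ℝ) (n : ℕ) : poch x (n + 1) = x * poch (x + 1) n := by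
  simp [poch, ascPochhammer_succ_left, Polynomial.eval_comp]

lemma poch_nonneg {x : ℝ} (hx : 0 ≤ x) (n : ℕ) : 0 ≤ poch x n := by
  induction n with
  | zero => simp [poch]
  | succ n ih => rw [poch_succ]; positivity

lemma poch_le_poch {x y : ℝ} (hx : 0 ≤ x) (hxy : x ≤ y) (n : ℕ) : poch x n ≤ poch y n := by
  induction n with
  | zero => simp [poch]
  | succ n ih =>
    rw [poch_succ, poch_succ]
    gcongr
    exact (poch_nonneg hx n).trans ih

lemma poch_le_factorial {x : ℝ} (hx0 : 0 ≤ x) (hx1 : x ≤ 1) (n : ℕ) : poch x n ≤ n.factorial :=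
  (poch_le_poch hx0 hx1 n).trans_eq (ascPochhammer_eval_one ℝ n)

noncomputable def kaCoeff (a : ℝ) (n : ℕ) : ℝ := poch a n * poch (1 - a) n / (n.factorial : ℝ) ^ 2

noncomputable def eaCoeff (a : ℝ) (n : ℕ) : ℝ :=
  poch (a - 1) n * poch (1 - a) n / (n.factorial : ℝ) ^ 2

lemma Ka_eq_tsum (a r : ℝ) : Ka a r = π / 2 * ∑' n, kaCoeff a n * (r ^ 2) ^ n := by
  simp only [Ka, kaCoeff, pow_mul]

lemma Ea_eq_tsum (a r : ℝ) : Ea a r = π / 2 * ∑' n, eaCoeff a n * (r ^ 2) ^ n := by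
  simp only [Ea, eaCoeff, pow_mul]

lemma kaCoeff_zero (a : ℝ) : kaCoeff a 0 = 1 := by simp [kaCoeff, poch]

lemma eaCoeff_zero (a : ℝ) : eaCoeff a 0 = 1 := by simp [eaCoeff, poch]

lemma eaCoeff_succ (a : ℝ) (n : ℕ) :
    eaCoeff a (n + 1) = kaCoeff a (n + 1) - kaCoeff a n + a / (n + 1) * kaCoeff a n := by
  have hn : (n.factorial : ℝ) ≠ 0 := by positivity
  simp only [eaCoeff, kaCoeff, poch_succ' (a - 1), sub_add_cancel, poch_succ a, poch_succ (1 - a),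
    Nat.factorial_succ, Nat.cast_mul, Nat.cast_succ]
  field_simp
  ring

lemma kaCoeff_nonneg {a : ℝ} (ha : a ∈ Icc 0 1) (n : ℕ) : 0 ≤ kaCoeff a n := by
  have := poch_nonneg ha.1 n
  have := poch_nonneg (sub_nonneg.2 ha.2) n
  unfold kaCoeff; positivity

lemma kaCoeff_pos {a : ℝ} (ha : a ∈ Ioo 0 1) (n : ℕ) : 0 < kaCoeff a n := by
  have := ascPochhammer_pos n a ha.1
  have := ascPochhammer_pos n (1 - a) (sub_pos.2 ha.2)
  unfold kaCoeff poch; positivity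

lemma kaCoeff_le_one {a : ℝ} (ha : a ∈ Icc 0 1) (n : ℕ) : kaCoeff a n ≤ 1 := by
  rw [kaCoeff, div_le_one (by positivity), sq]
  exact mul_le_mul (poch_le_factorial ha.1 ha.2 n)
    (poch_le_factorial (sub_nonneg.2 ha.2) (sub_le_self 1 ha.1) n)
    (poch_nonneg (sub_nonneg.2 ha.2) n) (by positivity)

lemma summable_mul_pow_of_abs_le {f : ℕ → ℝ} {C x : ℝ} (hf : ∀ n, |f n| ≤ C) (hx : |x| < 1) :
    Summable (fun n => f n * x ^ n) :=
  .of_norm_bounded ((summable_geometric_of_lt_one (abs_nonneg x) hx).mul_left C) fun n => by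
    rw [norm_mul, norm_pow, Real.norm_eq_abs, Real.norm_eq_abs]
    exact mul_le_mul_of_nonneg_right (hf n) (by positivity)

lemma summable_kaCoeff_mul_pow {a x : ℝ} (ha : a ∈ Icc 0 1) (hx : |x| < 1) :
    Summable (fun n => kaCoeff a n * x ^ n) :=
  summable_mul_pow_of_abs_le (fun n => by
    rw [abs_of_nonneg (kaCoeff_nonneg ha n)]; exact kaCoeff_le_one ha n) hx

lemma summable_div_mul_kaCoeff_mul_pow {a x : ℝ} (ha : a ∈ Icc 0 1) (hx : |x| < 1) :
    Summable (fun n => a / (n + 1) * kaCoeff a n * x ^ n) :=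
  summable_mul_pow_of_abs_le (fun n => by
    have h1 : a / (n + 1) ≤ 1 := div_le_one_of_le₀ (by linarith [ha.2, n.cast_nonneg (α := ℝ)])
      (by positivity)
    rw [abs_of_nonneg (mul_nonneg (div_nonneg ha.1 (by positivity)) (kaCoeff_nonneg ha n))]
    exact mul_le_one₀ h1 (kaCoeff_nonneg ha n) (kaCoeff_le_one ha n)) hx

lemma hasSum_eaCoeff_mul_pow {a x : ℝ} (ha : a ∈ Icc 0 1) (hx : |x| < 1) :
    HasSum (fun n => eaCoeff a n * x ^ n)
      ((1 - x) * ∑' n, kaCoeff a n * x ^ n + x * ∑' n, a / (n + 1) * kaCoeff a n * x ^ n) := by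
  set K := ∑' n, kaCoeff a n * x ^ n
  have hK := (summable_kaCoeff_mul_pow ha hx).hasSum
  have hS := (summable_div_mul_kaCoeff_mul_pow ha hx).hasSum
  have hK' : HasSum (fun n => kaCoeff a (n + 1) * x ^ (n + 1)) (K - 1) := by
    simpa [kaCoeff_zero] using (hasSum_nat_add_iff' 1).2 hK
  rw [← hasSum_nat_add_iff' 1]
  convert (hK'.sub (hK.mul_left x)).add (hS.mul_left x) using 1
  · ext n; rw [eaCoeff_succ]; ring
  · simp only [Finset.sum_range_one, eaCoeff_zero, pow_zero]; ring

noncomputable def f10Coeff (a : ℝ) (n : ℕ) : ℝ := (1 - 3 * a * (1 - a) / (n + 1)) * kaCoeff a n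

lemma f10Coeff_pos {a : ℝ} (ha : a ∈ Ioo 0 1) (n : ℕ) : 0 < f10Coeff a n := by
  have h : 3 * a * (1 - a) / (n + 1) < 1 := by
    rw [div_lt_one (by positivity)]
    nlinarith [sq_nonneg (a - 1 / 2), n.cast_nonneg (α := ℝ)]
  exact mul_pos (sub_pos.2 h) (kaCoeff_pos ha n)

lemma f10Coeff_mul_pow (a x : ℝ) (n : ℕ) : f10Coeff a n * x ^ n
    = kaCoeff a n * x ^ n - 3 * (1 - a) * (a / (n + 1) * kaCoeff a n * x ^ n) := by
  rw [f10Coeff]; ring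

lemma summable_f10Coeff_mul_pow {a x : ℝ} (ha : a ∈ Icc 0 1) (hx : |x| < 1) :
    Summable (fun n => f10Coeff a n * x ^ n) := by
  simp only [f10Coeff_mul_pow]
  exact (summable_kaCoeff_mul_pow ha hx).sub ((summable_div_mul_kaCoeff_mul_pow ha hx).mul_left _)

lemma f10_eq_tsum {a r : ℝ} (ha : a ∈ Icc 0 1) (hr : r ∈ Ioo 0 1) :
    Ka a r - 3 * (1 - a) * (Ea a r - (1 - r ^ 2) * Ka a r) / r ^ 2
      = π / 2 * ∑' n, f10Coeff a n * (r ^ 2) ^ n := by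
  have hx : |r ^ 2| < 1 := by rw [abs_sq, sq_lt_one_iff_abs_lt_one, abs_of_pos hr.1]; exact hr.2
  have hr0 : r ≠ 0 := hr.1.ne'
  have hK := summable_kaCoeff_mul_pow ha hx
  have hS := summable_div_mul_kaCoeff_mul_pow ha hx
  rw [Ka_eq_tsum, Ea_eq_tsum, (hasSum_eaCoeff_mul_pow ha hx).tsum_eq]
  have hsimp (K S : ℝ) : π / 2 * K - 3 * (1 - a) * (π / 2 * ((1 - r ^ 2) * K + r ^ 2 * S)
      - (1 - r ^ 2) * (π / 2 * K)) / r ^ 2 = π / 2 * (K - 3 * (1 - a) * S) := by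
    field_simp; ring
  rw [hsimp, ← tsum_mul_left, ← hK.tsum_sub (hS.mul_left _)]
  simp only [f10Coeff_mul_pow]

lemma tsum_mul_pow_lt_tsum_mul_pow {f : ℕ → ℝ} (hf : ∀ n, 0 ≤ f n) (hf1 : 0 < f 1) {x y : ℝ}
    (hx : 0 ≤ x) (hxy : x < y) (hy : Summable (fun n => f n * y ^ n)) :
    ∑' n, f n * x ^ n < ∑' n, f n * y ^ n :=
  hy.tsum_lt_tsum_of_nonneg (i := 1) (fun n => mul_nonneg (hf n) (pow_nonneg hx n))
    (fun n => mul_le_mul_of_nonneg_left (pow_le_pow_left₀ hx hxy.le n) (hf n))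
    (by simpa using mul_lt_mul_of_pos_left hxy hf1)

theorem f10_strictMono (a : ℝ) (ha : a ∈ Set.Ioc (0:ℝ) (1/2)) :
    StrictMonoOn (fun r : ℝ => Ka a r - 3*(1 - a) * (Ea a r - (1 - r^2) * Ka a r) / r^2)
      (Set.Ioo 0 1) := by
  have ha' : a ∈ Ioo 0 1 := ⟨ha.1, by linarith [ha.2]⟩
  intro r hr s hs hrs
  simp only [f10_eq_tsum (Ioo_subset_Icc_self ha') hr, f10_eq_tsum (Ioo_subset_Icc_self ha') hs]
  have hs2 : |s ^ 2| < 1 := by rw [abs_sq, sq_lt_one_iff_abs_lt_one, abs_of_pos hs.1]; exact hs.2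
  refine mul_lt_mul_of_pos_left ?_ (by positivity)
  exact tsum_mul_pow_lt_tsum_mul_pow (fun n => (f10Coeff_pos ha' n).le) (f10Coeff_pos ha' 1)
    (by positivity) (by gcongr; exact hr.1.le)
    (summable_f10Coeff_mul_pow (Ioo_subset_Icc_self ha') hs2)
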